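/- arXiv:1701.00637 — 2 statements merged into one kernel-verified Lean document; each statement's English description precedes it below -/
import Mathlib

section
/- If M β-reduces to N in n ≥ 1 steps, then N β-reduces to M^(n*) (the n-fold iterated Takahashi translation of M). -/
inductive Lam : Type
  | var : ℕ → Lam
  | lam : Lam → Lam
  | app : Lam → Lam → Lam
  deriving DecidableEq

namespace Lam

/-- term size -/
def size : Lam → ℕ
  | var _ => 1
  | lam M => 1 + M.size
  | app M N => 1 + M.size + N.size

/-- lift (shift) free variables ≥ d by 1 -/
def lift (d : ℕ) : Lam → Lam
  | var n => if n < d then var n else var (n+1)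
  | lam M => lam (M.lift (d+1))
  | app M N => app (M.lift d) (N.lift d)

/-- capture-avoiding substitution of N for the free variable x (de Bruijn) -/
def subst : Lam → ℕ → Lam → Lam
  | var n, x, N => if n = x then N else if x < n then var (n-1) else var n
  | lam M, x, N => lam (M.subst (x+1) (N.lift 0))
  | app M P, x, N => app (M.subst x N) (P.subst x N)

/-- number of free occurrences of the variable x -/
def count : Lam → ℕ → ℕ
  | var n, x => if n = x then 1 else 0
  | lam M, x => M.count (x+1)
  | app M N, x => M.count x + N.count x

/-- one-step β-reduction -/
inductive Step : Lam → Lam → Prop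
  | beta (M N : Lam) : Step (app (lam M) N) (M.subst 0 N)
  | appL {M M' : Lam} (N : Lam) : Step M M' → Step (app M N) (app M' N)
  | appR (M : Lam) {N N' : Lam} : Step N N' → Step (app M N) (app M N')
  | abs {M M' : Lam} : Step M M' → Step (lam M) (lam M')

/-- many-step β-reduction (reflexive-transitive closure) -/
def Red : Lam → Lam → Prop := Relation.ReflTransGen Step

/-- n-step β-reduction -/
def Steps : ℕ → Lam → Lam → Prop
  | 0, M, N => M = N
  | n+1, M, N => ∃ P, Step M P ∧ Steps n P N

/-- Takahashi translation (Gross-Knuth complete development) -/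
def star : Lam → Lam
  | var n => var n
  | lam M => lam (star M)
  | app (lam M) N => (star M).subst 0 (star N)
  | app (var n) N => app (var n) (star N)
  | app (app M₁ M₂) N => app (star (app M₁ M₂)) (star N)

/-- iterated Takahashi translation M^(n*) -/
def iterStar (n : ℕ) (M : Lam) : Lam := star^[n] M


/-! A β-step is a parallel reduction `⇒`, and Takahashi's triangle property says that `M ⇒ N`
implies `N ⇒ M*`. Applying it twice shows that `*` is monotone for `⇒`, so a first step `M → P`
gives `P^(k*) ⇒ M^((k+1)*)` for every `k`. If `M → P ↠^(n-1) N`, induction gives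
`N ↠ P^((n-1)*)`, and the parallel step `P^((n-1)*) ⇒ M^(n*)` finishes the chain. -/

theorem lift_lift (M : Lam) {i j : ℕ} (h : i ≤ j) :
    (M.lift j).lift i = (M.lift i).lift (j+1) := by
  induction M generalizing i j with
  | var n => grind [lift]
  | lam M ih => simp [lift, ih (show i+1 ≤ j+1 by omega)]
  | app M N ihM ihN => simp [lift, ihM h, ihN h]

theorem subst_lift (M : Lam) (x : ℕ) (N : Lam) : (M.lift x).subst x N = M := by
  induction M generalizing x N with
  | var n => grind [lift, subst]
  | lam M ih => simp [lift, subst, ih]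
  | app M P ihM ihP => simp [lift, subst, ihM, ihP]

theorem lift_subst_of_le (M : Lam) {d x : ℕ} (N : Lam) (h : d ≤ x) :
    (M.subst x N).lift d = (M.lift d).subst (x+1) (N.lift d) := by
  induction M generalizing d x N with
  | var n => grind [lift, subst]
  | lam M ih =>
    simp [subst, lift, ih (N.lift 0) (show d+1 ≤ x+1 by omega), lift_lift N (Nat.zero_le d)]
  | app M P ihM ihP => simp [subst, lift, ihM N h, ihP N h]

theorem lift_subst_of_ge (M : Lam) {d x : ℕ} (N : Lam) (h : x ≤ d) :
    (M.subst x N).lift d = (M.lift (d+1)).subst x (N.lift d) := by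
  induction M generalizing d x N with
  | var n => grind [lift, subst]
  | lam M ih =>
    simp [subst, lift, ih (N.lift 0) (show x+1 ≤ d+1 by omega), lift_lift N (Nat.zero_le d)]
  | app M P ihM ihP => simp [subst, lift, ihM N h, ihP N h]

theorem subst_subst (M : Lam) {i j : ℕ} (N P : Lam) (h : i ≤ j) :
    (M.subst i N).subst j P = (M.subst (j+1) (P.lift i)).subst i (N.subst j P) := by
  induction M generalizing i j N P with
  | var n => grind [subst, subst_lift]
  | lam M ih =>
    simp [subst, ih (N.lift 0) (P.lift 0) (show i+1 ≤ j+1 by omega), lift_lift P (Nat.zero_le i),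
      lift_subst_of_le N P (Nat.zero_le j)]
  | app M Q ihM ihQ => simp [subst, ihM N P h, ihQ N P h]

/-- Parallel β-reduction. -/
inductive Par : Lam → Lam → Prop
  | var (n : ℕ) : Par (var n) (var n)
  | lam {M M'} : Par M M' → Par (lam M) (lam M')
  | app {M M' N N'} : Par M M' → Par N N' → Par (app M N) (app M' N')
  | beta {M M' N N'} : Par M M' → Par N N' → Par (app (lam M) N) (M'.subst 0 N')

theorem Par.refl (M : Lam) : Par M M := by
  induction M with
  | var n => exact .var n
  | lam M ih => exact .lam ih
  | app M N ihM ihN => exact .app ihM ihN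

theorem Step.par {M N : Lam} (h : Step M N) : Par M N := by
  induction h with
  | beta M N => exact .beta (.refl M) (.refl N)
  | appL N _ ih => exact .app ih (.refl N)
  | appR M _ ih => exact .app (.refl M) ih
  | abs _ ih => exact .lam ih

theorem Par.lift {M M' : Lam} (h : Par M M') (d : ℕ) : Par (M.lift d) (M'.lift d) := by
  induction h generalizing d with
  | var n => exact .refl _
  | lam _ ih => exact .lam (ih (d+1))
  | app _ _ ihM ihN => exact .app (ihM d) (ihN d)
  | beta _ _ ihM ihN =>
    rw [lift_subst_of_ge _ _ (Nat.zero_le d)]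
    exact .beta (ihM (d+1)) (ihN d)

theorem Par.subst {M M' N N' : Lam} (h : Par M M') (hN : Par N N') (x : ℕ) :
    Par (M.subst x N) (M'.subst x N') := by
  induction h generalizing x N N' with
  | var n =>
    simp only [Lam.subst]
    split_ifs <;> first | exact hN | exact .refl _
  | lam _ ih => exact .lam (ih (hN.lift 0) (x+1))
  | app _ _ ihM ihN => exact .app (ihM hN x) (ihN hN x)
  | beta _ _ ihM ihN =>
    rw [subst_subst _ _ _ (Nat.zero_le x)]
    exact .beta (ihM (hN.lift 0) (x+1)) (ihN hN x)

theorem Par.triangle {M N : Lam} (h : Par M N) : Par N (star M) := by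
  induction h with
  | var n => exact .var n
  | lam _ ih => exact .lam ih
  | @app M _ _ _ hM _ ihM ihN =>
    cases M with
    | lam A =>
      -- `star` contracts the head redex here, so the triangle is closed by a `beta` step.
      cases hM with | lam _ =>
      cases ihM with | lam hA => exact .beta hA ihN
    | _ => exact .app ihM ihN
  | beta _ _ ihM ihN => exact ihM.subst ihN 0

theorem Par.iterate_star {M N : Lam} (h : Par M N) (n : ℕ) : Par (star^[n] M) (star^[n] N) := by
  induction n generalizing M N with
  | zero => exact h
  | succ n ih => exact ih h.triangle.triangle

theorem Red.app {M M' N N' : Lam} (hM : Red M M') (hN : Red N N') :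
    Red (Lam.app M N) (Lam.app M' N') :=
  (hM.lift (Lam.app · N) fun _ _ => Step.appL N).trans
    (hN.lift (Lam.app M' ·) fun _ _ => Step.appR M')

theorem Red.lam {M M' : Lam} (h : Red M M') : Red (Lam.lam M) (Lam.lam M') :=
  h.lift Lam.lam fun _ _ => Step.abs

theorem Par.red {M N : Lam} (h : Par M N) : Red M N := by
  induction h with
  | var n => exact .refl
  | lam _ ih => exact ih.lam
  | app _ _ ihM ihN => exact ihM.app ihN
  | beta _ _ ihM ihN => exact (ihM.lam.app ihN).tail (.beta _ _)

theorem Steps.red_iterate_star {n : ℕ} {M N : Lam} (h : Steps n M N) : Red N (star^[n] M) := by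
  induction n generalizing M with
  | zero => exact h ▸ .refl
  | succ n ih =>
    obtain ⟨P, hMP, hPN⟩ := h
    exact (ih hPN).trans (hMP.par.triangle.iterate_star n).red

end Lam

theorem cofinal_general {n : ℕ} {M N : Lam} (h : Lam.Steps n M N) :
    Lam.Red N (Lam.iterStar n M) :=
  h.red_iterate_star

/-- if M ↠^n N with n ≥ 1 then N ↠ M^(n*) -/
theorem cofinal {n : ℕ} {M N : Lam} (hn : 1 ≤ n) (h : Lam.Steps n M N) :
    Lam.Red N (Lam.iterStar n M) :=
  cofinal_general h
end

section
/- |M^(k*)| ≤ F(|M|, k) for all k, where F(m,0) = m and F(m,k+1) = 2^(F(m,k)−1); consequently |M^(k*)| < 2_k^{|M|}, the k-fold iterated exponential of |M|, for k ≥ 1. -/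
namespace Lam

/-- F(m,0) = m, F(m,k+1) = 2^(F(m,k)−1) -/
def F (m : ℕ) : ℕ → ℕ
  | 0 => m
  | k+1 => 2 ^ (F m k - 1)

/-- iterated exponentials: 2_0^m = m, 2_{n+1}^m = 2^(2_n^m) -/
def twoIter : ℕ → ℕ → ℕ
  | 0, m => m
  | n+1, m => 2 ^ twoIter n m

end Lam


/-!
Substitution multiplies sizes at worst, `|M[x:=N]| ≤ |M|·|N|`, since each of the at most `|M|`
occurrences of `x` is replaced by a copy of `N`. By induction along the clauses of `star` this gives
`|M*| ≤ 2^(|M|-1)`: in the β-clause the exponents add, `(|M|-1) + (|N|-1) ≤ |(λM)N| - 1`, and in the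
other clauses `1 + 2^a + 2^b ≤ 2^(a+b+2)`. Iterating, `|M^(k*)| ≤ F(|M|,k)`, and `F(m,k) - 1 < 2_k^m`
by induction on `k`, whence `F(m,k+1) = 2^(F(m,k)-1) < 2^(2_k^m) = 2_{k+1}^m`.
-/

namespace Lam

theorem one_le_size (M : Lam) : 1 ≤ M.size := by
  cases M <;> simp only [size] <;> omega

@[simp]
theorem size_lift (d : ℕ) (M : Lam) : (M.lift d).size = M.size := by
  induction M generalizing d with
  | var n => unfold lift; split <;> rfl
  | lam M ih => simp only [lift, size, ih]
  | app M N ihM ihN => simp only [lift, size, ihM, ihN]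

theorem size_subst_le (M : Lam) (x : ℕ) (N : Lam) : (M.subst x N).size ≤ M.size * N.size := by
  induction M generalizing x N with
  | var n =>
    have := one_le_size N
    unfold subst
    split_ifs <;> simp only [size] <;> omega
  | lam M ih =>
    have := ih (x + 1) (N.lift 0)
    rw [size_lift] at this
    simp only [subst, size]
    nlinarith [one_le_size N]
  | app M P ihM ihP =>
    simp only [subst, size]
    nlinarith [ihM x N, ihP x N, one_le_size N]

theorem size_app_le_two_pow {M N M' N' : Lam} (hM : M'.size ≤ 2 ^ (M.size - 1))
    (hN : N'.size ≤ 2 ^ (N.size - 1)) : (app M' N').size ≤ 2 ^ ((app M N).size - 1) := by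
  have hexp : (app M N).size - 1 = (M.size - 1) + (N.size - 1) + 2 := by
    simp only [size]; have := one_le_size M; have := one_le_size N; omega
  rw [hexp, pow_add, pow_add]
  simp only [size]
  nlinarith [Nat.one_le_two_pow (n := M.size - 1), Nat.one_le_two_pow (n := N.size - 1)]

theorem size_star_le (M : Lam) : (star M).size ≤ 2 ^ (M.size - 1) := by
  induction M using star.induct with
  | case1 n => simp [star, size]
  | case2 M ih =>
    have hexp : (lam M).size - 1 = M.size - 1 + 1 := by
      simp only [size]; have := one_le_size M; omega
    rw [star, hexp, pow_succ]
    simp only [size]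
    have := Nat.one_le_two_pow (n := M.size - 1)
    omega
  | case3 M N ihM ihN =>
    calc ((star M).subst 0 (star N)).size
        ≤ (star M).size * (star N).size := size_subst_le _ _ _
      _ ≤ 2 ^ (M.size - 1) * 2 ^ (N.size - 1) := Nat.mul_le_mul ihM ihN
      _ = 2 ^ (M.size - 1 + (N.size - 1)) := (pow_add _ _ _).symm
      _ ≤ 2 ^ ((app (lam M) N).size - 1) :=
        Nat.pow_le_pow_right two_pos (by simp only [size]; omega)
  | case4 n N ih => exact size_app_le_two_pow (by simp [size]) ih
  | case5 M₁ M₂ N ihM ihN => exact size_app_le_two_pow ihM ihN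

theorem iterStar_succ (k : ℕ) (M : Lam) : iterStar (k + 1) M = star (iterStar k M) :=
  Function.iterate_succ_apply' star k M

theorem size_iterStar_le_F (M : Lam) (k : ℕ) : (iterStar k M).size ≤ F M.size k := by
  induction k with
  | zero => exact le_rfl
  | succ k ih =>
    rw [iterStar_succ]
    exact (size_star_le _).trans (Nat.pow_le_pow_right two_pos (Nat.sub_le_sub_right ih 1))

theorem F_sub_one_lt_twoIter {m : ℕ} (hm : 1 ≤ m) (k : ℕ) : F m k - 1 < twoIter k m := by
  induction k with
  | zero => simp only [F, twoIter]; omega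
  | succ k ih =>
    calc F m (k + 1) - 1 < 2 ^ (F m k - 1) := Nat.sub_one_lt (Nat.two_pow_pos _).ne'
      _ ≤ twoIter (k + 1) m := Nat.pow_le_pow_right two_pos ih.le

theorem F_succ_lt_twoIter_succ {m : ℕ} (hm : 1 ≤ m) (k : ℕ) :
    F m (k + 1) < twoIter (k + 1) m :=
  Nat.pow_lt_pow_right one_lt_two (F_sub_one_lt_twoIter hm k)

end Lam

/-- |M^(k*)| ≤ F(|M|,k), and |M^(k*)| < 2_k^{|M|} for k ≥ 1 -/
theorem size_iterStar (M : Lam) (k : ℕ) :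
    (Lam.iterStar k M).size ≤ Lam.F M.size k ∧
      (1 ≤ k → (Lam.iterStar k M).size < Lam.twoIter k M.size) := by
  refine ⟨Lam.size_iterStar_le_F M k, fun hk => ?_⟩
  obtain ⟨j, rfl⟩ := Nat.exists_eq_add_of_le' hk
  exact (Lam.size_iterStar_le_F M _).trans_lt (Lam.F_succ_lt_twoIter_succ (Lam.one_le_size M) j)
end
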